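/- Loss of expressivity for the two-qubit model initialized at |00⟩. With the model of the previous setting (initial state |0⟩⊗|0⟩, observable σz⊗σz, Hamiltonian x·σz⊗σz + θ₁(t)·σx⊗I₂ + θ₂(t)·I₂⊗σx with piecewise-constant controls), for every K ∈ ℕ, Δt > 0, controls Θ ∈ (ℝ²)^K and every scaling factor θ0 ∈ ℝ, one has sup_{x ∈ [−1,1]} |θ0 · f(x,Θ) − x| ≥ 1. In particular the model cannot approximate the odd target function f0(x) = x to any accuracy better than 1. -/

import Mathlib

open Matrix Kronecker

/-- The Pauli matrix `σx`. -/
noncomputable def σx : Matrix (Fin 2) (Fin 2) ℂ := !![0, 1; 1, 0]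

/-- The Pauli matrix `σy`. -/
noncomputable def σy : Matrix (Fin 2) (Fin 2) ℂ := !![0, -Complex.I; Complex.I, 0]

/-- The Pauli matrix `σz`. -/
noncomputable def σz : Matrix (Fin 2) (Fin 2) ℂ := !![1, 0; 0, -1]

/-- The 2×2 identity matrix. -/
noncomputable def I₂ : Matrix (Fin 2) (Fin 2) ℂ := 1

/-- The state sequence of the two-qubit pulse-based model with initial state `|00⟩`:
`ψ_{k+1} = exp(−iΔt(x·σz⊗σz + θ₁^{(k)}·σx⊗I₂ + θ₂^{(k)}·I₂⊗σx)) ψ_k`. -/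
noncomputable def psi (K : ℕ) (Δt : ℝ) (Θ : Fin K → ℝ × ℝ) (x : ℝ) :
    ℕ → (Fin 2 × Fin 2 → ℂ)
  | 0 => fun a => if a = (0, 0) then 1 else 0
  | k + 1 =>
      if h : k < K then
        (NormedSpace.exp ((-(Δt : ℂ) * Complex.I) •
            ((x : ℂ) • (σz ⊗ₖ σz) + ((Θ ⟨k, h⟩).1 : ℂ) • (σx ⊗ₖ I₂) +
              ((Θ ⟨k, h⟩).2 : ℂ) • (I₂ ⊗ₖ σx)))).mulVec (psi K Δt Θ x k)
      else psi K Δt Θ x k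

/-- The model output `f(x,Θ) = ⟨ψ_K(x), (σz⊗σz) ψ_K(x)⟩`. -/
noncomputable def f (K : ℕ) (Δt : ℝ) (Θ : Fin K → ℝ × ℝ) (x : ℝ) : ℝ :=
  (star (psi K Δt Θ x K) ⬝ᵥ (σz ⊗ₖ σz).mulVec (psi K Δt Θ x K)).re

/-!
Conjugation by `σz ⊗ σz` commutes with the encoding term `x · σz ⊗ σz` and anticommutes with
both drive terms, so it maps the Hamiltonian at `x` to minus the Hamiltonian at `-x`. The
Hamiltonian has real entries, so complex conjugation of the propagator `exp(-iΔt H)` undoes that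
sign. Together, `ψ_k(-x) = (σz ⊗ σz) ψ̄_k(x)` (the initial state `|00⟩` is real and fixed by
`σz ⊗ σz`), hence the model output is even in `x`. An even `g` has `g(-1) = g(1)`, and either
`|g(1) - 1| ≥ 1` or `|g(1) + 1| ≥ 1`.
-/

section
variable {ι : Type*} [Fintype ι] [DecidableEq ι]

theorem Matrix.exp_map_star (A : Matrix ι ι ℂ) :
    (NormedSpace.exp A).map star = NormedSpace.exp (A.map star) := by
  change ((NormedSpace.exp A)ᴴ)ᵀ = NormedSpace.exp (Aᴴᵀ)
  rw [exp_transpose, exp_conjTranspose]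

omit [DecidableEq ι] in
theorem Matrix.star_mulVec_eq_map_star_mulVec (M : Matrix ι ι ℂ) (v : ι → ℂ) :
    star (M *ᵥ v) = M.map star *ᵥ star v :=
  funext fun i => RingHom.map_mulVec (starRingEnd ℂ) M v i

theorem Matrix.exp_conj_of_mul_self_eq_one {D : Matrix ι ι ℂ} (hD : D * D = 1)
    (A : Matrix ι ι ℂ) : NormedSpace.exp (D * A * D) = D * NormedSpace.exp A * D :=
  Matrix.exp_units_conj ⟨D, D, hD, hD⟩ A

theorem Matrix.exp_conjTranspose_mul_exp {A : Matrix ι ι ℂ} (hA : Aᴴ = -A) :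
    (NormedSpace.exp A)ᴴ * NormedSpace.exp A = 1 := by
  rw [← exp_conjTranspose, hA, ← Matrix.exp_add_of_commute _ _ (Commute.refl A).neg_left,
    neg_add_cancel, NormedSpace.exp_zero]

theorem Matrix.star_mulVec_dotProduct_mulVec {U : Matrix ι ι ℂ} (hU : Uᴴ * U = 1)
    (v : ι → ℂ) : star (U *ᵥ v) ⬝ᵥ U *ᵥ v = star v ⬝ᵥ v := by
  rw [star_mulVec, dotProduct_mulVec, vecMul_vecMul, hU, vecMul_one]

theorem Matrix.norm_star_dotProduct_diagonal_mulVec_le {d : ι → ℂ} (hd : ∀ i, ‖d i‖ ≤ 1)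
    (v : ι → ℂ) : ‖star v ⬝ᵥ diagonal d *ᵥ v‖ ≤ (star v ⬝ᵥ v).re := by
  have hre : (star v ⬝ᵥ v).re = ∑ i, ‖v i‖ ^ 2 := by
    simp [dotProduct, Complex.re_sum, ← Complex.normSq_eq_norm_sq, Complex.normSq_apply]
  rw [hre]
  calc ‖star v ⬝ᵥ diagonal d *ᵥ v‖ ≤ ∑ i, ‖star (v i) * (d i * v i)‖ := by
        simp only [dotProduct, mulVec_diagonal]; exact norm_sum_le _ _
    _ ≤ ∑ i, ‖v i‖ ^ 2 := Finset.sum_le_sum fun i _ => calc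
        ‖star (v i) * (d i * v i)‖ = ‖d i‖ * ‖v i‖ ^ 2 := by
          rw [norm_mul, norm_mul, norm_star]; ring
        _ ≤ ‖v i‖ ^ 2 := mul_le_of_le_one_left (by positivity) (hd i)

end

theorem mul_mul_eq_neg_of_anticommute {R : Type*} [Ring R] {d a : R} (hd : d * d = 1)
    (hda : d * a = -(a * d)) : d * a * d = -a := by
  rw [hda, neg_mul, mul_assoc, hd, mul_one]

theorem σz_mul_σz : σz * σz = 1 := by
  ext i j; fin_cases i <;> fin_cases j <;> simp [σz, Matrix.mul_apply]

theorem σz_mul_σx : σz * σx = -(σx * σz) := by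
  ext i j; fin_cases i <;> fin_cases j <;> simp [σz, σx, Matrix.mul_apply]

theorem σz_eq_diagonal : σz = diagonal ![1, -1] := by
  ext i j; fin_cases i <;> fin_cases j <;> simp [σz]

theorem σz_kronecker_σz_mul_self : (σz ⊗ₖ σz) * (σz ⊗ₖ σz) = 1 := by
  rw [← mul_kronecker_mul, σz_mul_σz, one_kronecker_one]

theorem σz_kronecker_σz_mul_σx_kronecker_I₂ :
    (σz ⊗ₖ σz) * (σx ⊗ₖ I₂) = -((σx ⊗ₖ I₂) * (σz ⊗ₖ σz)) := by
  simp only [← mul_kronecker_mul, σz_mul_σx, I₂, mul_one, one_mul]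
  ext; simp

theorem σz_kronecker_σz_mul_I₂_kronecker_σx :
    (σz ⊗ₖ σz) * (I₂ ⊗ₖ σx) = -((I₂ ⊗ₖ σx) * (σz ⊗ₖ σz)) := by
  simp only [← mul_kronecker_mul, σz_mul_σx, I₂, mul_one, one_mul]
  ext; simp

theorem σz_kronecker_σz_map_star : (σz ⊗ₖ σz).map star = σz ⊗ₖ σz := by
  ext ⟨i, j⟩ ⟨k, l⟩
  fin_cases i <;> fin_cases j <;> fin_cases k <;> fin_cases l <;> simp [σz]

noncomputable def hamiltonian (x : ℝ) (θ : ℝ × ℝ) : Matrix (Fin 2 × Fin 2) (Fin 2 × Fin 2) ℂ :=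
  (x : ℂ) • (σz ⊗ₖ σz) + (θ.1 : ℂ) • (σx ⊗ₖ I₂) + (θ.2 : ℂ) • (I₂ ⊗ₖ σx)

theorem hamiltonian_map_star (x : ℝ) (θ : ℝ × ℝ) :
    (hamiltonian x θ).map star = hamiltonian x θ := by
  ext ⟨i, j⟩ ⟨k, l⟩
  fin_cases i <;> fin_cases j <;> fin_cases k <;> fin_cases l <;>
    simp [hamiltonian, σx, σz, I₂]

theorem hamiltonian_isHermitian (x : ℝ) (θ : ℝ × ℝ) : (hamiltonian x θ).IsHermitian := by
  ext ⟨i, j⟩ ⟨k, l⟩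
  fin_cases i <;> fin_cases j <;> fin_cases k <;> fin_cases l <;>
    simp [hamiltonian, σx, σz, I₂]

theorem σz_kronecker_σz_mul_hamiltonian_mul (x : ℝ) (θ : ℝ × ℝ) :
    (σz ⊗ₖ σz) * hamiltonian x θ * (σz ⊗ₖ σz) = -hamiltonian (-x) θ := by
  simp only [hamiltonian, Matrix.mul_add, Matrix.add_mul, mul_smul_comm, smul_mul_assoc]
  rw [σz_kronecker_σz_mul_self, one_mul,
    mul_mul_eq_neg_of_anticommute σz_kronecker_σz_mul_self
      σz_kronecker_σz_mul_σx_kronecker_I₂,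
    mul_mul_eq_neg_of_anticommute σz_kronecker_σz_mul_self
      σz_kronecker_σz_mul_I₂_kronecker_σx]
  push_cast
  module

noncomputable def propagator (Δt x : ℝ) (θ : ℝ × ℝ) : Matrix (Fin 2 × Fin 2) (Fin 2 × Fin 2) ℂ :=
  NormedSpace.exp ((-(Δt : ℂ) * Complex.I) • hamiltonian x θ)

theorem propagator_conjTranspose_mul_self (Δt x : ℝ) (θ : ℝ × ℝ) :
    (propagator Δt x θ)ᴴ * propagator Δt x θ = 1 := by
  refine Matrix.exp_conjTranspose_mul_exp ?_
  rw [conjTranspose_smul, (hamiltonian_isHermitian x θ).eq, ← neg_smul]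
  simp

theorem propagator_neg (Δt x : ℝ) (θ : ℝ × ℝ) :
    propagator Δt (-x) θ = (σz ⊗ₖ σz) * (propagator Δt x θ).map star * (σz ⊗ₖ σz) := by
  have hconj : ((-(Δt : ℂ) * Complex.I) • hamiltonian x θ).map star
      = ((Δt : ℂ) * Complex.I) • hamiltonian x θ := by
    ext i j
    have h := congrFun₂ (hamiltonian_map_star x θ) i j
    simp only [map_apply, Complex.star_def] at h
    simp [h]
  rw [propagator, propagator, Matrix.exp_map_star, hconj,
    ← Matrix.exp_conj_of_mul_self_eq_one σz_kronecker_σz_mul_self, mul_smul_comm, smul_mul_assoc,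
    σz_kronecker_σz_mul_hamiltonian_mul, smul_neg, ← neg_smul, neg_mul]

theorem psi_succ_of_lt {K : ℕ} (Δt : ℝ) (Θ : Fin K → ℝ × ℝ) (x : ℝ) {k : ℕ} (hk : k < K) :
    psi K Δt Θ x (k + 1) = propagator Δt x (Θ ⟨k, hk⟩) *ᵥ psi K Δt Θ x k := by
  simp [psi, hk, propagator, hamiltonian]

theorem psi_succ_of_le {K : ℕ} (Δt : ℝ) (Θ : Fin K → ℝ × ℝ) (x : ℝ) {k : ℕ} (hk : K ≤ k) :
    psi K Δt Θ x (k + 1) = psi K Δt Θ x k := by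
  simp [psi, hk.not_gt]

theorem star_psi_dotProduct_psi (K : ℕ) (Δt : ℝ) (Θ : Fin K → ℝ × ℝ) (x : ℝ) (k : ℕ) :
    star (psi K Δt Θ x k) ⬝ᵥ psi K Δt Θ x k = 1 := by
  induction k with
  | zero => simp [psi, dotProduct]
  | succ k ih =>
    rcases lt_or_ge k K with hk | hk
    · rw [psi_succ_of_lt Δt Θ x hk,
        Matrix.star_mulVec_dotProduct_mulVec (propagator_conjTranspose_mul_self ..), ih]
    · rw [psi_succ_of_le Δt Θ x hk, ih]

theorem psi_neg (K : ℕ) (Δt : ℝ) (Θ : Fin K → ℝ × ℝ) (x : ℝ) (k : ℕ) :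
    psi K Δt Θ (-x) k = (σz ⊗ₖ σz) *ᵥ star (psi K Δt Θ x k) := by
  induction k with
  | zero =>
    ext ⟨i, j⟩
    fin_cases i <;> fin_cases j <;>
      simp [psi, σz_eq_diagonal, diagonal_kronecker_diagonal, mulVec_diagonal]
  | succ k ih =>
    rcases lt_or_ge k K with hk | hk
    · rw [psi_succ_of_lt Δt Θ _ hk, psi_succ_of_lt Δt Θ _ hk, ih, propagator_neg,
        Matrix.star_mulVec_eq_map_star_mulVec, mulVec_mulVec, mulVec_mulVec,
        Matrix.mul_assoc _ (σz ⊗ₖ σz), σz_kronecker_σz_mul_self, Matrix.mul_one]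
    · rw [psi_succ_of_le Δt Θ _ hk, psi_succ_of_le Δt Θ _ hk, ih]

theorem f_neg (K : ℕ) (Δt : ℝ) (Θ : Fin K → ℝ × ℝ) (x : ℝ) :
    f K Δt Θ (-x) = f K Δt Θ x := by
  rw [f, f, psi_neg, Matrix.star_mulVec_eq_map_star_mulVec, star_star, σz_kronecker_σz_map_star,
    mulVec_mulVec, σz_kronecker_σz_mul_self, one_mulVec, dotProduct_comm]

theorem abs_f_le_one (K : ℕ) (Δt : ℝ) (Θ : Fin K → ℝ × ℝ) (x : ℝ) : |f K Δt Θ x| ≤ 1 := by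
  have hdiag : ∀ a : Fin 2 × Fin 2, ‖![(1 : ℂ), -1] a.1 * ![1, -1] a.2‖ ≤ 1 := by
    rintro ⟨i, j⟩
    fin_cases i <;> fin_cases j <;> simp
  calc |f K Δt Θ x| ≤ ‖star (psi K Δt Θ x K) ⬝ᵥ (σz ⊗ₖ σz) *ᵥ psi K Δt Θ x K‖ :=
        Complex.abs_re_le_norm _
    _ ≤ (star (psi K Δt Θ x K) ⬝ᵥ psi K Δt Θ x K).re := by
        rw [σz_eq_diagonal, diagonal_kronecker_diagonal]
        exact Matrix.norm_star_dotProduct_diagonal_mulVec_le hdiag _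
    _ = 1 := by rw [star_psi_dotProduct_psi, Complex.one_re]

theorem one_le_sSup_abs_sub_self_of_even {g : ℝ → ℝ} (heven : ∀ x, g (-x) = g x) {C : ℝ}
    (hC : ∀ x, |g x| ≤ C) : 1 ≤ sSup ((fun x => |g x - x|) '' Set.Icc (-1) 1) := by
  have hbdd : BddAbove ((fun x => |g x - x|) '' Set.Icc (-1) 1) := by
    refine ⟨C + 1, ?_⟩
    rintro _ ⟨x, hx, rfl⟩
    calc |g x - x| ≤ |g x| + |x| := abs_sub _ _
      _ ≤ C + 1 := add_le_add (hC x) (abs_le.2 hx)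
  have hle : ∀ x ∈ Set.Icc (-1 : ℝ) 1, |g x - x| ≤ sSup ((fun x => |g x - x|) '' Set.Icc (-1) 1) :=
    fun x hx => le_csSup hbdd ⟨x, hx, rfl⟩
  rcases le_total (g 1) 0 with hg | hg
  · calc 1 ≤ |g 1 - 1| := by rw [abs_of_nonpos (by linarith)]; linarith
      _ ≤ _ := hle 1 (by norm_num)
  · calc 1 ≤ |g (-1) - (-1)| := by rw [heven, abs_of_nonneg (by linarith)]; linarith
      _ ≤ _ := hle (-1) (by norm_num)

theorem loss_of_expressivity_general (K : ℕ) (Δt : ℝ) (Θ : Fin K → ℝ × ℝ)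
    (θ0 : ℝ) :
    1 ≤ sSup ((fun x => |θ0 * f K Δt Θ x - x|) '' Set.Icc (-1 : ℝ) 1) :=
  one_le_sSup_abs_sub_self_of_even (fun x => by rw [f_neg]) (C := |θ0|) fun x => by
    rw [abs_mul]
    exact mul_le_of_le_one_right (abs_nonneg θ0) (abs_f_le_one K Δt Θ x)

/-- **Loss of expressivity for the two-qubit model initialized at `|00⟩`**: for every choice
of controls and scaling factor, `sup_{x ∈ [−1,1]} |θ0·f(x,Θ) − x| ≥ 1`; the model cannot
approximate the odd target function `f0(x) = x` to accuracy better than `1`. -/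
theorem loss_of_expressivity (K : ℕ) (Δt : ℝ) (hΔt : 0 < Δt) (Θ : Fin K → ℝ × ℝ)
    (θ0 : ℝ) :
    1 ≤ sSup ((fun x => |θ0 * f K Δt Θ x - x|) '' Set.Icc (-1 : ℝ) 1) :=
  loss_of_expressivity_general K Δt Θ θ0
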